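/- arXiv:2505.05200 — 2 statements merged into one kernel-verified Lean document; each statement's English description precedes it below -/
import Mathlib

section
/- Let V_A and V_B be disjoint finite sets with |V_A| = |V_B| = n, let G_A and G_B be arbitrary simple graphs on V_A and V_B respectively, and let G' be the unweighted graph on V_A ∪ V_B whose edges are those of G_A, those of G_B, and all pairs {a,b} with a ∈ V_A, b ∈ V_B. Then G' is exact with φ(G') = MC(G') = n², and the rank-1 matrix X* = x xᵀ, where x takes value +1 on V_A and −1 on V_B, is an optimal SDP solution. -/
open Matrix Finset

/-- The Laplacian matrix of a weighted graph given by a weight function `w`. -/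
noncomputable def lapW {V : Type*} [Fintype V] [DecidableEq V] (w : V → V → ℝ) :
    Matrix V V ℝ :=
  Matrix.of fun i j => if i = j then ∑ k, w i k else -w i j

/-- `w` is a valid weight function: symmetric, zero diagonal, nonnegative. -/
def IsWeight {V : Type*} [Fintype V] (w : V → V → ℝ) : Prop :=
  (∀ i j, w i j = w j i) ∧ (∀ i, w i i = 0) ∧ ∀ i j, 0 ≤ w i j

/-- The maximum-cut value `MC(G)`. -/
noncomputable def maxCutVal {V : Type*} [Fintype V] [DecidableEq V] (w : V → V → ℝ) : ℝ :=
  sSup {c | ∃ x : V → ℝ, (∀ i, x i = 1 ∨ x i = -1) ∧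
    c = (1 / 4) * (x ⬝ᵥ (lapW w).mulVec x)}

/-- The Max-Cut SDP value `φ(G)`. -/
noncomputable def sdpVal {V : Type*} [Fintype V] [DecidableEq V] (w : V → V → ℝ) : ℝ :=
  sSup {c | ∃ X : Matrix V V ℝ, X.PosSemidef ∧ (∀ i, X i i = 1) ∧
    c = (1 / 4) * (lapW w * X).trace}

/-- `X` is an optimal solution of the Max-Cut SDP for the weighted graph `w`. -/
def IsOptSol {V : Type*} [Fintype V] [DecidableEq V] (w : V → V → ℝ)
    (X : Matrix V V ℝ) : Prop :=
  X.PosSemidef ∧ (∀ i, X i i = 1) ∧ (1 / 4) * (lapW w * X).trace = sdpVal w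

/-- The Max-Cut SDP relaxation is exact: `φ(G) = MC(G)`. -/
def IsExact {V : Type*} [Fintype V] [DecidableEq V] (w : V → V → ℝ) : Prop :=
  sdpVal w = maxCutVal w

/-- The join graph `G' = G_A ∪ G_B ∪ K(V_A, V_B)`: the unweighted graph on `V_A ⊕ V_B`
whose edges are those of `A`, those of `B`, and all pairs between the two sides. -/
def joinW {m n : ℕ} (A : SimpleGraph (Fin m)) (B : SimpleGraph (Fin n))
    [DecidableRel A.Adj] [DecidableRel B.Adj] :
    (Fin m ⊕ Fin n) → (Fin m ⊕ Fin n) → ℝ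
  | Sum.inl i, Sum.inl j => if A.Adj i j then 1 else 0
  | Sum.inr i, Sum.inr j => if B.Adj i j then 1 else 0
  | _, _ => 1

/-- The vector taking value `+1` on `V_A` and `-1` on `V_B`. -/
def xJoin (m n : ℕ) : (Fin m ⊕ Fin n) → ℝ := Sum.elim (fun _ => 1) fun _ => -1

/-!
For a zero-diagonal weight `w` and an SDP-feasible `X` (PSD, unit diagonal),
`tr(L_w X) = ∑ᵢⱼ wᵢⱼ (1 - Xⱼᵢ)`, and every `1 - Xⱼᵢ` is nonnegative by the `2 × 2` minors of `X`.
So if all weights are at most `1`, `tr(L_w X) ≤ ∑ᵢⱼ (1 - Xⱼᵢ) = N² - 𝟙ᵀX𝟙 ≤ N²`, i.e.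
`φ ≤ N² / 4` on `N` vertices. The join on `2n` vertices has the cut `(V_A, V_B)` with all `n²`
cross edges, which meets this bound; hence `MC = φ = n²` and its rank-one matrix is optimal.
-/

namespace Matrix.PosSemidef

variable {V : Type*} [Fintype V] {X : Matrix V V ℝ}

lemma two_mul_apply_le [DecidableEq V] (hX : X.PosSemidef) (i j : V) :
    2 * X i j ≤ X i i + X j j := by
  have hsymm : X j i = X i j := by simpa using congr_fun₂ hX.isHermitian i j
  have := hX.dotProduct_mulVec_nonneg (Pi.single i 1 - Pi.single j 1)
  simp only [star_trivial, mulVec_sub, mulVec_single, MulOpposite.op_one, one_smul,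
    dotProduct_sub, sub_dotProduct, single_dotProduct, col_apply, one_mul, hsymm] at this
  linarith

lemma sum_sum_apply_nonneg (hX : X.PosSemidef) : 0 ≤ ∑ i, ∑ j, X i j := by
  simpa [dotProduct, mulVec, Finset.mul_sum] using hX.dotProduct_mulVec_nonneg (fun _ => 1)

end Matrix.PosSemidef

lemma vecMulVec_self_apply_self {V : Type*} {x : V → ℝ} (hx : ∀ i, x i = 1 ∨ x i = -1)
    (i : V) : vecMulVec x x i i = 1 := by
  rcases hx i with h | h <;> simp [vecMulVec_apply, h]

section MaxCut

variable {V : Type*} [Fintype V]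

lemma trace_mul_vecMulVec_self (M : Matrix V V ℝ) (x : V → ℝ) :
    (M * vecMulVec x x).trace = x ⬝ᵥ M *ᵥ x := by
  rw [mul_vecMulVec, trace_vecMulVec, dotProduct_comm]

lemma posSemidef_vecMulVec_self (x : V → ℝ) : (vecMulVec x x).PosSemidef := by
  simpa using posSemidef_vecMulVec_self_star x

variable [DecidableEq V]

lemma trace_lapW_mul {w : V → V → ℝ} (hdiag : ∀ i, w i i = 0) (X : Matrix V V ℝ) :
    (lapW w * X).trace = ∑ i, ∑ j, w i j * (X i i - X j i) := by
  simp only [trace, diag_apply, mul_apply, lapW, of_apply]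
  refine Finset.sum_congr rfl fun i _ => ?_
  have hsplit : ∀ j, (if i = j then ∑ k, w i k else -w i j) * X j i
      = (if i = j then (∑ k, w i k) * X i i else 0) - w i j * X j i := by
    intro j
    split_ifs with h <;> simp [h, hdiag]
  simp [hsplit, Finset.sum_sub_distrib, Finset.sum_mul, mul_sub]

lemma trace_lapW_mul_le_card_sq {w : V → V → ℝ} (hdiag : ∀ i, w i i = 0)
    (hle : ∀ i j, w i j ≤ 1) {X : Matrix V V ℝ}
    (hX : X.PosSemidef) (hX1 : ∀ i, X i i = 1) :
    (lapW w * X).trace ≤ (Fintype.card V : ℝ) ^ 2 := by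
  have hoff : ∀ i j, 0 ≤ 1 - X j i := fun i j => by
    linarith [hX.two_mul_apply_le j i, hX1 i, hX1 j]
  calc (lapW w * X).trace = ∑ i, ∑ j, w i j * (1 - X j i) := by
        simp [trace_lapW_mul hdiag, hX1]
    _ ≤ ∑ i, ∑ j, (1 - X j i) :=
        sum_le_sum fun i _ => sum_le_sum fun j _ => mul_le_of_le_one_left (hoff i j) (hle i j)
    _ = (Fintype.card V : ℝ) ^ 2 - ∑ i, ∑ j, X j i := by
        simp [Finset.sum_sub_distrib, sq]
    _ ≤ (Fintype.card V : ℝ) ^ 2 := by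
        rw [Finset.sum_comm]
        exact sub_le_self _ hX.sum_sum_apply_nonneg

/-- A cut whose value bounds every feasible SDP point certifies exactness. -/
lemma sdpVal_eq_maxCutVal_eq_of_forall_le {w : V → V → ℝ} {x : V → ℝ} {c : ℝ}
    (hx : ∀ i, x i = 1 ∨ x i = -1) (hc : (1 / 4) * (x ⬝ᵥ lapW w *ᵥ x) = c)
    (hle : ∀ X : Matrix V V ℝ, X.PosSemidef → (∀ i, X i i = 1) →
      (1 / 4) * (lapW w * X).trace ≤ c) :
    sdpVal w = c ∧ maxCutVal w = c ∧ IsOptSol w (vecMulVec x x) := by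
  have hval : (1 / 4) * (lapW w * vecMulVec x x).trace = c := by
    rw [trace_mul_vecMulVec_self, hc]
  have hsdp : sdpVal w = c := by
    refine IsGreatest.csSup_eq ⟨⟨_, posSemidef_vecMulVec_self x,
      vecMulVec_self_apply_self hx, hval.symm⟩, ?_⟩
    rintro _ ⟨X, hX, hX1, rfl⟩
    exact hle X hX hX1
  have hmc : maxCutVal w = c := by
    refine IsGreatest.csSup_eq ⟨⟨x, hx, hc.symm⟩, ?_⟩
    rintro _ ⟨y, hy, rfl⟩
    rw [← trace_mul_vecMulVec_self]
    exact hle _ (posSemidef_vecMulVec_self y) (vecMulVec_self_apply_self hy)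
  exact ⟨hsdp, hmc, posSemidef_vecMulVec_self x, vecMulVec_self_apply_self hx,
    hval.trans hsdp.symm⟩

end MaxCut

section Join

variable {m n : ℕ} (A : SimpleGraph (Fin m)) (B : SimpleGraph (Fin n))
  [DecidableRel A.Adj] [DecidableRel B.Adj]

lemma joinW_self (i : Fin m ⊕ Fin n) : joinW A B i i = 0 := by
  rcases i with i | i <;> simp [joinW]

lemma joinW_le_one (i j : Fin m ⊕ Fin n) : joinW A B i j ≤ 1 := by
  unfold joinW; split <;> (try split_ifs) <;> norm_num

lemma xJoin_eq_one_or_eq_neg_one (i : Fin m ⊕ Fin n) : xJoin m n i = 1 ∨ xJoin m n i = -1 := by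
  rcases i with i | i <;> simp [xJoin]

/-- Only the `m * n` cross pairs are cut, each counted twice with `(1 - (-1)) = 2`. -/
lemma xJoin_dotProduct_lapW_joinW_mulVec :
    xJoin m n ⬝ᵥ lapW (joinW A B) *ᵥ xJoin m n = 4 * m * n := by
  rw [← trace_mul_vecMulVec_self, trace_lapW_mul (joinW_self A B)]
  simp [Fintype.sum_sum_type, joinW, xJoin, vecMulVec_apply]
  ring

end Join

/-- **Join of two graphs on equally sized vertex sets is exact.**
If `|V_A| = |V_B| = n`, then `G'` is exact with `φ(G') = MC(G') = n²`, and the rank-1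
matrix `X* = x xᵀ`, where `x` is `+1` on `V_A` and `-1` on `V_B`, is an optimal SDP
solution. -/
theorem joinW_isExact_of_card_eq {n : ℕ} (A B : SimpleGraph (Fin n))
    [DecidableRel A.Adj] [DecidableRel B.Adj] :
    IsExact (joinW A B) ∧
    sdpVal (joinW A B) = (n : ℝ) ^ 2 ∧
    maxCutVal (joinW A B) = (n : ℝ) ^ 2 ∧
    IsOptSol (joinW A B) (Matrix.vecMulVec (xJoin n n) (xJoin n n)) := by
  have hval : (1 / 4) * (xJoin n n ⬝ᵥ lapW (joinW A B) *ᵥ xJoin n n) = (n : ℝ) ^ 2 := by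
    rw [xJoin_dotProduct_lapW_joinW_mulVec]
    ring
  have hle : ∀ X : Matrix (Fin n ⊕ Fin n) (Fin n ⊕ Fin n) ℝ, X.PosSemidef → (∀ i, X i i = 1) →
      (1 / 4) * (lapW (joinW A B) * X).trace ≤ (n : ℝ) ^ 2 := by
    intro X hX hX1
    have := trace_lapW_mul_le_card_sq (joinW_self A B) (joinW_le_one A B) hX hX1
    rw [Fintype.card_sum, Fintype.card_fin] at this
    push_cast at this
    linarith
  obtain ⟨hsdp, hmc, hopt⟩ :=
    sdpVal_eq_maxCutVal_eq_of_forall_le xJoin_eq_one_or_eq_neg_one hval hle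
  exact ⟨hsdp.trans hmc.symm, hsdp, hmc, hopt⟩
end

section
/- Let n ≥ 3 and let m ∈ ℝⁿ with all entries positive be non-dominating, and let G be the complete graph on n vertices with edge weights w_{ij} = mᵢmⱼ. Suppose there exist at most n − 2 distinct unordered partitions (S, Sᶜ) of {1,…,n} with Σ_{j∈S} mⱼ = Σ_{j∉S} mⱼ. Then the Max-Cut SDP for G admits an optimal solution that does not lie in the convex hull of the set of rank-1 optimal SDP solutions. -/
/-!
On unit-diagonal matrices `tr (L_G X) = (∑ mᵢ)² - mᵀ X m`, so the optimal SDP solutions are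
exactly the feasible `X` with `X m = 0`. There is one: the Gram matrix of planar unit vectors
with `∑ mᵢ uᵢ = 0`, read off a triangle with sides `m_max`, `∑_B mᵢ`, `∑_C mᵢ` for a suitable
split `B ∪ C` of the remaining indices. A rank-one optimum is `s sᵀ` for a sign vector `s` with
`s ⬝ m = 0`, i.e. a balanced partition, so there are at most `n - 2` of them and their convex
hull consists of matrices of rank at most `n - 2`. On the other hand
`c (‖m‖² I - m mᵀ) + D Z D`, where `Z` is such a Gram matrix for the slightly rescaled weights
`D m`, is an optimal solution whose kernel is spanned by `m`, so it has rank `n - 1`.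
-/

open Matrix Finset

/-- The complete graph on `n` vertices weighted by `m`: edge `ij` has weight `mᵢ mⱼ`. -/
noncomputable def completeW {n : ℕ} (m : Fin n → ℝ) : Fin n → Fin n → ℝ :=
  fun i j => if i = j then 0 else m i * m j

open Filter Topology

section Rank

variable {m n K : Type*} [Fintype n] [Field K]

theorem Matrix.rank_add_le (A B : Matrix m n K) : (A + B).rank ≤ A.rank + B.rank := by
  rw [Matrix.rank, Matrix.rank, Matrix.rank, Matrix.mulVecLin_add]
  refine (Submodule.finrank_mono ?_).trans (Submodule.finrank_add_le_finrank_add_finrank _ _)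
  rintro _ ⟨v, rfl⟩
  exact Submodule.add_mem_sup ⟨v, rfl⟩ ⟨v, rfl⟩

theorem Matrix.rank_sum_le {α : Type*} (s : Finset α) (f : α → Matrix m n K) :
    (∑ a ∈ s, f a).rank ≤ ∑ a ∈ s, (f a).rank :=
  Finset.sum_hom_rel (r := fun (A : Matrix m n K) (k : ℕ) => A.rank ≤ k)
    (by simp [Matrix.rank_zero]) fun _ _ _ h => (Matrix.rank_add_le _ _).trans (by gcongr)

theorem Matrix.rank_smul_le (c : K) (A : Matrix m n K) : (c • A).rank ≤ A.rank := by
  rcases eq_or_ne c 0 with rfl | hc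
  · simp [Matrix.rank_zero]
  · exact (Matrix.rank_smul_of_mem_nonZeroDivisors A (mem_nonZeroDivisors_of_ne_zero hc)).le

theorem Matrix.rank_le_ncard_of_mem_convexHull [LinearOrder K] [IsStrictOrderedRing K]
    {s : Set (Matrix m n K)} (hs : s.Finite) (hrank : ∀ Y ∈ s, Y.rank ≤ 1)
    {X : Matrix m n K} (hX : X ∈ convexHull K s) : X.rank ≤ s.ncard := by
  lift s to Finset (Matrix m n K) using hs
  obtain ⟨f, -, rfl⟩ := Submodule.mem_span_finset.1
    (convexHull_min Submodule.subset_span (Submodule.span K _).convex hX)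
  rw [Set.ncard_coe_finset, Finset.card_eq_sum_ones]
  exact (Matrix.rank_sum_le _ _).trans
    (Finset.sum_le_sum fun Y hY => (Matrix.rank_smul_le _ Y).trans (hrank Y hY))

theorem Matrix.card_sub_one_le_rank {X : Matrix n n K} {v : n → K} (hv : v ≠ 0)
    (hker : LinearMap.ker X.mulVecLin ≤ K ∙ v) : Fintype.card n - 1 ≤ X.rank := by
  have hker_le : Module.finrank K (LinearMap.ker X.mulVecLin) ≤ 1 :=
    (Submodule.finrank_mono hker).trans (finrank_span_singleton hv).le
  have := X.mulVecLin.finrank_range_add_finrank_ker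
  rw [Module.finrank_fintype_fun_eq_card] at this
  rw [Matrix.rank]
  omega

theorem Matrix.eq_vecMulVec_col_of_rank_eq_one {Y : Matrix n n K} (hsymm : Y.IsSymm)
    (hdiag : ∀ i, Y i i = 1) (hrank : Y.rank = 1) (z : n) :
    Y = vecMulVec (fun i => Y i z) (fun i => Y i z) := by
  classical
  obtain ⟨v, hv⟩ := finrank_le_one_iff.1 hrank.le
  have hcol : ∀ j, ∃ c : K, ∀ i, Y i j = c * v.1 i := by
    intro j
    obtain ⟨c, hc⟩ := hv ⟨Y *ᵥ Pi.single j 1, Pi.single j 1, rfl⟩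
    exact ⟨c, fun i => by simpa using (congrFun (congrArg Subtype.val hc) i).symm⟩
  choose c hc using hcol
  ext i j
  have hsym : ∀ i j, c j * v.1 i = c i * v.1 j := fun i j => by
    rw [← hc, ← hc]; exact (hsymm.apply i j).symm
  have hzz : c z * v.1 z = 1 := by rw [← hc]; exact hdiag z
  rw [vecMulVec_apply, hc j i, hc z i, hc z j]
  calc c j * v.1 i = c j * v.1 i * (c z * v.1 z) := by rw [hzz, mul_one]
    _ = (c z * v.1 i) * (c z * v.1 j) := by rw [hsym j z]; ring

end Rank

open scoped ComplexOrder in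
theorem Matrix.PosSemidef.mulVec_eq_zero_of_add {ι 𝕜 : Type*} [Fintype ι] [RCLike 𝕜]
    {A B : Matrix ι ι 𝕜} (hA : A.PosSemidef) (hB : B.PosSemidef) {x : ι → 𝕜}
    (hx : (A + B) *ᵥ x = 0) : A *ᵥ x = 0 := by
  have hsum : star x ⬝ᵥ A *ᵥ x + star x ⬝ᵥ B *ᵥ x = 0 := by
    rw [← dotProduct_add, ← add_mulVec, hx, dotProduct_zero]
  exact (hA.dotProduct_mulVec_zero_iff x).1 <|
    ((add_eq_zero_iff_of_nonneg (hA.dotProduct_mulVec_nonneg x)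
      (hB.dotProduct_mulVec_nonneg x)).1 hsum).1

section Perp

variable {ι : Type*} [Fintype ι] [DecidableEq ι]

noncomputable def perpMatrix (m : ι → ℝ) : Matrix ι ι ℝ :=
  (m ⬝ᵥ m) • 1 - vecMulVec m m

theorem perpMatrix_mulVec (m x : ι → ℝ) :
    perpMatrix m *ᵥ x = (m ⬝ᵥ m) • x - (m ⬝ᵥ x) • m := by
  ext i
  simp [perpMatrix, sub_mulVec, smul_mulVec, vecMulVec_mulVec, mul_comm]

theorem perpMatrix_apply_self (m : ι → ℝ) (i : ι) : perpMatrix m i i = m ⬝ᵥ m - m i ^ 2 := by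
  simp [perpMatrix, vecMulVec_apply, sq]

theorem perpMatrix_mulVec_self (m : ι → ℝ) : perpMatrix m *ᵥ m = 0 := by
  rw [perpMatrix_mulVec, dotProduct_comm, sub_self]

theorem posSemidef_perpMatrix (m : ι → ℝ) : (perpMatrix m).PosSemidef := by
  refine .of_dotProduct_mulVec_nonneg ?_ fun x => ?_
  · simp [perpMatrix, IsHermitian]
  · have hcs : (m ⬝ᵥ x) ^ 2 ≤ (m ⬝ᵥ m) * (x ⬝ᵥ x) := by
      simpa [dotProduct, sq] using Finset.sum_mul_sq_le_sq_mul_sq Finset.univ m x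
    rw [star_trivial, perpMatrix_mulVec, dotProduct_sub, dotProduct_smul, dotProduct_smul,
      dotProduct_comm x m, smul_eq_mul, smul_eq_mul]
    nlinarith

theorem ker_perpMatrix_le_span {m : ι → ℝ} (hm : m ≠ 0) :
    LinearMap.ker (perpMatrix m).mulVecLin ≤ ℝ ∙ m := by
  intro x hx
  rw [LinearMap.mem_ker, mulVecLin_apply, perpMatrix_mulVec, sub_eq_zero] at hx
  have hmm : m ⬝ᵥ m ≠ 0 := by simpa using hm
  refine Submodule.mem_span_singleton.2 ⟨(m ⬝ᵥ x) / (m ⬝ᵥ m), ?_⟩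
  rw [div_eq_inv_mul, mul_smul, ← hx, smul_smul, inv_mul_cancel₀ hmm, one_smul]

end Perp

theorem Finset.exists_subset_abs_sum_sub_sum_sdiff_le {α : Type*} [DecidableEq α] {f : α → ℝ}
    {K : ℝ} (hK : 0 ≤ K) (s : Finset α) (hf : ∀ i ∈ s, 0 ≤ f i ∧ f i ≤ K) :
    ∃ B ⊆ s, |∑ i ∈ B, f i - ∑ i ∈ s \ B, f i| ≤ K := by
  induction s using Finset.induction_on with
  | empty => exact ⟨∅, by simp [hK]⟩
  | @insert a s ha ih =>
    obtain ⟨B, hBs, hB⟩ := ih fun i hi => hf i (mem_insert_of_mem hi)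
    obtain ⟨hfa₀, hfaK⟩ := hf a (mem_insert_self a s)
    have haB : a ∉ B := fun h => ha (hBs h)
    rw [abs_le] at hB
    -- put `a` on the lighter side
    rcases le_or_gt (∑ i ∈ B, f i) (∑ i ∈ s \ B, f i) with h | h
    · refine ⟨insert a B, insert_subset_insert a hBs, ?_⟩
      rw [insert_sdiff_insert, sdiff_insert_of_notMem ha, sum_insert haB, abs_le]
      constructor <;> linarith
    · refine ⟨B, hBs.trans (subset_insert a s), ?_⟩
      rw [insert_sdiff_of_notMem s haB, sum_insert fun h => ha (mem_sdiff.1 h).1, abs_le]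
      constructor <;> linarith

theorem exists_unit_vectors_of_triangle {a b c : ℝ} (ha : 0 < a) (hb : 0 < b) (hc : 0 < c)
    (hc_le : c ≤ a + b) (hb_le : b ≤ a + c) (ha_le : a ≤ b + c) :
    ∃ p q r : Fin 2 → ℝ, p ⬝ᵥ p = 1 ∧ q ⬝ᵥ q = 1 ∧ r ⬝ᵥ r = 1 ∧ a • p + b • q + c • r = 0 := by
  -- the triangle with vertices `0`, `(a, 0)` and `(x, y)`, with `|(x, y)| = c`
  set x := (a ^ 2 + c ^ 2 - b ^ 2) / (2 * a)
  have hx : x ^ 2 ≤ c ^ 2 := by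
    rw [div_pow, div_le_iff₀ (by positivity)]
    nlinarith [mul_nonneg (mul_nonneg (sub_nonneg.2 hc_le) (sub_nonneg.2 hb_le))
      (mul_nonneg (sub_nonneg.2 ha_le) (by positivity : (0 : ℝ) ≤ a + b + c))]
  have h2ax : 2 * a * x = a ^ 2 + c ^ 2 - b ^ 2 := mul_div_cancel₀ _ (by positivity)
  set y := √(c ^ 2 - x ^ 2)
  have hy : y ^ 2 = c ^ 2 - x ^ 2 := Real.sq_sqrt (sub_nonneg.2 hx)
  refine ⟨![1, 0], ![(x - a) / b, y / b], ![-x / c, -y / c], ?_, ?_, ?_, ?_⟩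
  · simp
  · simp only [dotProduct, Fin.sum_univ_two, Matrix.cons_val_zero, Matrix.cons_val_one]
    field_simp
    linear_combination hy - h2ax
  · simp only [dotProduct, Fin.sum_univ_two, Matrix.cons_val_zero, Matrix.cons_val_one]
    field_simp
    linear_combination hy
  · ext i
    fin_cases i <;> simp [field]

theorem exists_posSemidef_mulVec_eq_zero_of_unit_vectors {ι k : Type*} [Fintype ι] [Fintype k]
    {m : ι → ℝ} (u : ι → k → ℝ) (hu : ∀ i, u i ⬝ᵥ u i = 1) (hm : ∑ i, m i • u i = 0) :
    ∃ X : Matrix ι ι ℝ, X.PosSemidef ∧ (∀ i, X i i = 1) ∧ X *ᵥ m = 0 := by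
  refine ⟨of u * (of u)ᴴ, posSemidef_self_mul_conjTranspose _, fun i => ?_, ?_⟩
  · simpa [mul_apply, dotProduct] using hu i
  · have : (of u)ᴴ *ᵥ m = ∑ i, m i • u i := by
      ext l
      simp [mulVec, dotProduct, mul_comm]
    rw [← mulVec_mulVec, this, hm, mulVec_zero]

section NonDominating

variable {ι : Type*} [Fintype ι] [DecidableEq ι]

def NonDominating (m : ι → ℝ) : Prop :=
  ∀ j, m j < ∑ k ∈ univ.erase j, m k

theorem NonDominating.exists_lt_one {m : ι → ℝ} (hm : NonDominating m) :
    ∃ t, 0 < t ∧ t < 1 ∧ ∀ j, m j < t * ∑ k ∈ univ.erase j, m k := by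
  have hnear : ∀ᶠ t in 𝓝 (1 : ℝ), ∀ j, m j < t * ∑ k ∈ univ.erase j, m k :=
    Filter.eventually_all.2 fun j =>
      (tendsto_id.mul_const _).eventually_const_lt (by simpa using hm j)
  have hleft : ∀ᶠ t in 𝓝[<] (1 : ℝ), 0 < t ∧ t < 1 ∧ ∀ j, m j < t * ∑ k ∈ univ.erase j, m k := by
    filter_upwards [nhdsWithin_le_nhds (eventually_gt_nhds one_pos), nhdsWithin_le_nhds hnear,
      self_mem_nhdsWithin] with t ht0 hmt ht1
    exact ⟨ht0, ht1, hmt⟩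
  exact hleft.exists

theorem nonDominating_of_mul_le {m m' : ι → ℝ} {t : ℝ}
    (ht : ∀ j, m j < t * ∑ k ∈ univ.erase j, m k) (hlow : ∀ i, t * m i ≤ m' i)
    (hup : ∀ i, m' i ≤ m i) : NonDominating m' := fun j =>
  calc m' j ≤ m j := hup j
    _ < t * ∑ k ∈ univ.erase j, m k := ht j
    _ ≤ ∑ k ∈ univ.erase j, m' k := by
      rw [mul_sum]; exact sum_le_sum fun k _ => hlow k

theorem NonDominating.exists_posSemidef_mulVec_eq_zero [Nonempty ι] {m : ι → ℝ}
    (hm : NonDominating m) (hpos : ∀ i, 0 < m i) :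
    ∃ X : Matrix ι ι ℝ, X.PosSemidef ∧ (∀ i, X i i = 1) ∧ X *ᵥ m = 0 := by
  -- split the weights other than the largest one, `m j`, into two parts `B`, `C` such that
  -- `m j`, `∑ B` and `∑ C` are the sides of a triangle
  obtain ⟨j, -, hj⟩ := exists_max_image univ m univ_nonempty
  obtain ⟨B, hBj, hB⟩ := (univ.erase j).exists_subset_abs_sum_sub_sum_sdiff_le (hpos j).le
    fun i _ => ⟨(hpos i).le, hj i (mem_univ i)⟩
  set C := univ.erase j \ B
  have hsplit : ∀ g : ι → Fin 2 → ℝ, ∑ i, g i = g j + (∑ i ∈ B, g i + ∑ i ∈ C, g i) := by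
    intro g
    rw [← add_sum_erase _ g (mem_univ j), add_comm (∑ i ∈ B, g i), sum_sdiff hBj]
  have hj_lt : m j < ∑ i ∈ B, m i + ∑ i ∈ C, m i := by
    rw [add_comm, sum_sdiff hBj]
    exact hm j
  obtain ⟨hB₁, hB₂⟩ := abs_le.1 hB
  obtain ⟨p, q, r, hp, hq, hr, hpqr⟩ := exists_unit_vectors_of_triangle (hpos j)
    (b := ∑ i ∈ B, m i) (c := ∑ i ∈ C, m i) (by linarith) (by linarith) (by linarith)
    (by linarith) hj_lt.le
  have hjB : j ∉ B := fun h => (mem_erase.1 (hBj h)).1 rfl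
  set u : ι → Fin 2 → ℝ := fun i => if i = j then p else if i ∈ B then q else r
  have hBu : ∑ i ∈ B, m i • u i = (∑ i ∈ B, m i) • q := by
    rw [sum_smul]
    exact sum_congr rfl fun i hi => by simp [u, ne_of_mem_of_not_mem hi hjB, hi]
  have hCu : ∑ i ∈ C, m i • u i = (∑ i ∈ C, m i) • r := by
    rw [sum_smul]
    exact sum_congr rfl fun i hi => by
      simp [u, (mem_erase.1 (mem_sdiff.1 hi).1).1, (mem_sdiff.1 hi).2]
  refine exists_posSemidef_mulVec_eq_zero_of_unit_vectors u
    (fun i => by simp only [u]; split_ifs <;> assumption) ?_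
  rw [hsplit, hBu, hCu, ← add_assoc, ← hpqr]
  simp [u]

end NonDominating

section MaxRank

variable {ι : Type*} [Fintype ι] [DecidableEq ι]

theorem exists_smul_perpMatrix_diag_add_sq_eq_one {m : ι → ℝ} (hm : m ≠ 0) {t : ℝ}
    (ht0 : 0 < t) (ht1 : t < 1) :
    ∃ c > 0, ∃ s : ι → ℝ, (∀ i, t ≤ s i ∧ s i ≤ 1) ∧ ∀ i, c * perpMatrix m i i + s i ^ 2 = 1 := by
  have hM : 0 < m ⬝ᵥ m := by simpa using dotProduct_self_star_pos_iff.2 hm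
  have hmi : ∀ i, m i ^ 2 ≤ m ⬝ᵥ m := fun i => by
    simpa [dotProduct, sq] using single_le_sum (fun k _ => mul_self_nonneg (m k)) (mem_univ i)
  set c := (1 - t ^ 2) / (m ⬝ᵥ m)
  have hcP : ∀ i, 0 ≤ c * perpMatrix m i i ∧ c * perpMatrix m i i ≤ 1 - t ^ 2 := fun i => by
    have hc0 : 0 ≤ c := div_nonneg (by nlinarith) hM.le
    have hcM : c * (m ⬝ᵥ m) = 1 - t ^ 2 := div_mul_cancel₀ _ hM.ne'
    rw [perpMatrix_apply_self]
    constructor <;> nlinarith [hmi i, sq_nonneg (m i)]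
  refine ⟨c, div_pos (by nlinarith) hM, fun i => √(1 - c * perpMatrix m i i), fun i => ⟨?_, ?_⟩,
    fun i => ?_⟩
  · exact Real.le_sqrt_of_sq_le (by linarith [hcP i])
  · exact Real.sqrt_le_one.2 (by linarith [hcP i])
  · rw [Real.sq_sqrt (by linarith [hcP i, sq_nonneg t])]
    ring

theorem NonDominating.exists_posSemidef_ker_le_span [Nonempty ι] {m : ι → ℝ}
    (hm : NonDominating m) (hpos : ∀ i, 0 < m i) :
    ∃ X : Matrix ι ι ℝ, X.PosSemidef ∧ (∀ i, X i i = 1) ∧ X *ᵥ m = 0 ∧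
      LinearMap.ker X.mulVecLin ≤ ℝ ∙ m := by
  have hm0 : m ≠ 0 := fun h => (hpos (Classical.arbitrary ι)).ne' (by simp [h])
  obtain ⟨t, ht0, ht1, ht⟩ := hm.exists_lt_one
  obtain ⟨c, hc, s, hs, hdiag⟩ := exists_smul_perpMatrix_diag_add_sq_eq_one hm0 ht0 ht1
  -- `Z` solves the problem for the weights `s * m`, which stay non-dominating since `t ≤ s ≤ 1`
  obtain ⟨Z, hZ, hZdiag, hZm⟩ := (nonDominating_of_mul_le (m' := s * m) ht
      (fun i => mul_le_mul_of_nonneg_right (hs i).1 (hpos i).le)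
      (fun i => mul_le_of_le_one_left (hpos i).le (hs i).2)).exists_posSemidef_mulVec_eq_zero
    fun i => mul_pos (ht0.trans_le (hs i).1) (hpos i)
  have hP := (posSemidef_perpMatrix m).smul hc.le
  have hDZD : (diagonal s * Z * diagonal s).PosSemidef := by
    simpa using hZ.mul_mul_conjTranspose_same (diagonal s)
  have hDm : diagonal s *ᵥ m = s * m := funext fun i => mulVec_diagonal s m i
  refine ⟨c • perpMatrix m + diagonal s * Z * diagonal s, hP.add hDZD, fun i => ?_, ?_,
    fun x hx => ?_⟩
  · rw [Matrix.add_apply, Matrix.smul_apply, mul_diagonal, diagonal_mul, hZdiag, smul_eq_mul]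
    linear_combination hdiag i
  · rw [add_mulVec, smul_mulVec, perpMatrix_mulVec_self, ← mulVec_mulVec,
      ← mulVec_mulVec, hDm, hZm]
    simp
  · have hPx := hP.mulVec_eq_zero_of_add hDZD hx
    rw [smul_mulVec, smul_eq_zero] at hPx
    exact ker_perpMatrix_le_span hm0 (hPx.resolve_left hc.ne')

end MaxRank

section CompleteGraph

variable {n : ℕ} (m : Fin n → ℝ)

theorem lapW_completeW :
    lapW (completeW m) = diagonal (fun i => m i * ∑ k, m k) - vecMulVec m m := by
  ext i j
  by_cases h : i = j
  · subst h
    simp only [lapW, completeW, sum_ite, sum_const_zero, zero_add, of_apply, ↓reduceIte,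
      Matrix.sub_apply, diagonal_apply_eq, vecMulVec_apply, ← ne_eq, filter_ne]
    rw [mul_sum, ← add_sum_erase _ _ (mem_univ i)]
    ring
  · simp [lapW, completeW, h, vecMulVec_apply]

theorem trace_lapW_completeW_mul {X : Matrix (Fin n) (Fin n) ℝ} (hX : ∀ i, X i i = 1) :
    (lapW (completeW m) * X).trace = (∑ i, m i) ^ 2 - m ⬝ᵥ X *ᵥ m := by
  rw [lapW_completeW, sub_mul, trace_sub, vecMulVec_mul, trace_vecMulVec, dotProduct_mulVec,
    dotProduct_comm m]
  simp [trace, hX, ← sum_mul, sq]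

variable {m}

theorem sdpVal_completeW {X₀ : Matrix (Fin n) (Fin n) ℝ} (h₀ : X₀.PosSemidef)
    (hdiag₀ : ∀ i, X₀ i i = 1) (hm₀ : X₀ *ᵥ m = 0) :
    sdpVal (completeW m) = (∑ i, m i) ^ 2 / 4 := by
  refine IsGreatest.csSup_eq ⟨⟨X₀, h₀, hdiag₀, ?_⟩, ?_⟩
  · rw [trace_lapW_completeW_mul m hdiag₀, hm₀, dotProduct_zero]
    ring
  · rintro _ ⟨X, hX, hdiag, rfl⟩
    have := hX.dotProduct_mulVec_nonneg m
    rw [star_trivial] at this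
    rw [trace_lapW_completeW_mul m hdiag]
    linarith

theorem isOptSol_completeW_iff {X₀ : Matrix (Fin n) (Fin n) ℝ} (h₀ : X₀.PosSemidef)
    (hdiag₀ : ∀ i, X₀ i i = 1) (hm₀ : X₀ *ᵥ m = 0) {X : Matrix (Fin n) (Fin n) ℝ} :
    IsOptSol (completeW m) X ↔ X.PosSemidef ∧ (∀ i, X i i = 1) ∧ X *ᵥ m = 0 := by
  refine and_congr_right fun hX => and_congr_right fun hdiag => ?_
  rw [sdpVal_completeW h₀ hdiag₀ hm₀, trace_lapW_completeW_mul m hdiag,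
    ← hX.dotProduct_mulVec_zero_iff, star_trivial]
  constructor <;> intro h <;> linarith

end CompleteGraph

theorem Set.two_mul_ncard_sep_mem_le {α : Type*} [Fintype α] [DecidableEq α]
    {T : Set (Finset α)} (hT : ∀ S ∈ T, Sᶜ ∈ T) (z : α) :
    2 * {S ∈ T | z ∈ S}.ncard ≤ T.ncard := by
  set T₀ := {S ∈ T | z ∈ S}
  have hdisj : Disjoint T₀ ((·ᶜ) '' T₀) :=
    Set.disjoint_left.2 fun S hS ⟨S', hS', hS'S⟩ => by
      rw [← hS'S] at hS
      exact Finset.mem_compl.1 hS.2 hS'.2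
  have hsub : T₀ ∪ (·ᶜ) '' T₀ ⊆ T := by
    rintro _ (hS | ⟨S, hS, rfl⟩)
    exacts [hS.1, hT S hS.1]
  calc 2 * T₀.ncard = T₀.ncard + ((·ᶜ) '' T₀).ncard := by
        rw [Set.ncard_image_of_injective T₀ compl_injective, two_mul]
    _ = (T₀ ∪ (·ᶜ) '' T₀).ncard := (Set.ncard_union_eq hdisj).symm
    _ ≤ T.ncard := Set.ncard_le_ncard hsub

section SignVectors

variable {ι : Type*} [Fintype ι] [DecidableEq ι]

def signVec (S : Finset ι) : ι → ℝ := fun i => if i ∈ S then 1 else -1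

theorem signVec_dotProduct (S : Finset ι) (m : ι → ℝ) :
    signVec S ⬝ᵥ m = ∑ i ∈ S, m i - ∑ i ∈ Sᶜ, m i := by
  rw [dotProduct, ← sum_add_sum_compl S, sub_eq_add_neg, ← sum_neg_distrib]
  congr 1 <;> refine sum_congr rfl fun i hi => ?_
  · simp [signVec, hi]
  · simp [signVec, Finset.mem_compl.1 hi]

theorem exists_balanced_eq_vecMulVec_signVec {m : ι → ℝ} {Y : Matrix ι ι ℝ}
    (hY : Y.PosSemidef) (hdiag : ∀ i, Y i i = 1) (hm : Y *ᵥ m = 0) (hrank : Y.rank = 1)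
    (z : ι) : ∃ S : Finset ι, z ∈ S ∧ ∑ i ∈ S, m i = ∑ i ∈ Sᶜ, m i ∧
      Y = vecMulVec (signVec S) (signVec S) := by
  have hY₁ := eq_vecMulVec_col_of_rank_eq_one (isHermitian_iff_isSymm.1 hY.isHermitian)
    hdiag hrank z
  have hz : (fun i => Y i z) z = 1 := hdiag z
  generalize (fun i => Y i z) = s at hY₁ hz
  subst hY₁
  have hs : ∀ i, s i = 1 ∨ s i = -1 := fun i => mul_self_eq_one_iff.1 (hdiag i)
  set S := univ.filter (s · = 1)
  have hsS : signVec S = s := funext fun i => by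
    rcases hs i with h | h <;> norm_num [S, signVec, h]
  have hsm : s ⬝ᵥ m = 0 := by
    simpa [vecMulVec_mulVec, hz] using congrFun hm z
  refine ⟨S, by simpa [S] using hz, ?_, by rw [hsS]⟩
  rw [← sub_eq_zero, ← signVec_dotProduct, hsS, hsm]

end SignVectors

theorem rankOne_isOptSol_completeW_subset {n : ℕ} {m : Fin n → ℝ}
    {X₀ : Matrix (Fin n) (Fin n) ℝ} (h₀ : X₀.PosSemidef) (hdiag₀ : ∀ i, X₀ i i = 1)
    (hm₀ : X₀ *ᵥ m = 0) (z : Fin n) :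
    {Y | IsOptSol (completeW m) Y ∧ Y.rank = 1} ⊆ (fun S => vecMulVec (signVec S) (signVec S)) ''
      {S | ∑ i ∈ S, m i = ∑ i ∈ Sᶜ, m i ∧ z ∈ S} := by
  rintro Y ⟨hY, hrank⟩
  obtain ⟨hYpsd, hYdiag, hYm⟩ := (isOptSol_completeW_iff h₀ hdiag₀ hm₀).1 hY
  obtain ⟨S, hzS, hS, rfl⟩ := exists_balanced_eq_vecMulVec_signVec hYpsd hYdiag hYm hrank z
  exact ⟨S, ⟨hS, hzS⟩, rfl⟩

-- `hpart` counts subsets, so each unordered balanced partition `{S, Sᶜ}` is counted twice.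
/-- **Optimal solutions outside the convex hull of rank-1 optima.**
Let `n ≥ 3`, let `m ∈ ℝⁿ` be positive and non-dominating, and let `G` be the complete
graph with weights `w_{ij} = mᵢ mⱼ`. If there are at most `n - 2` distinct unordered
balanced partitions (i.e. at most `2(n - 2)` subsets `S` with `∑_{i ∈ S} mᵢ = ∑_{i ∉ S} mᵢ`,
since the subsets `S` and `Sᶜ` determine the same unordered partition), then the Max-Cut
SDP for `G` admits an optimal solution lying outside the convex hull of the set of
rank-1 optimal SDP solutions. -/
theorem completeW_exists_optSol_not_mem_convexHull {n : ℕ} (hn : 3 ≤ n) (m : Fin n → ℝ)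
    (hpos : ∀ i, 0 < m i)
    (hnd : ∀ j, m j < ∑ k ∈ Finset.univ.erase j, m k)
    (hpart : Set.ncard {S : Finset (Fin n) | ∑ i ∈ S, m i = ∑ i ∈ Sᶜ, m i}
      ≤ 2 * (n - 2)) :
    ∃ X : Matrix (Fin n) (Fin n) ℝ,
      IsOptSol (completeW m) X ∧
      X ∉ convexHull ℝ
        {Y : Matrix (Fin n) (Fin n) ℝ | IsOptSol (completeW m) Y ∧ Y.rank = 1} := by
  let z : Fin n := ⟨0, by omega⟩
  have : Nonempty (Fin n) := ⟨z⟩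
  obtain ⟨X, hX, hXdiag, hXm, hXker⟩ :=
    NonDominating.exists_posSemidef_ker_le_span (m := m) hnd hpos
  refine ⟨X, (isOptSol_completeW_iff hX hXdiag hXm).2 ⟨hX, hXdiag, hXm⟩, fun hhull => ?_⟩
  set T := {S : Finset (Fin n) | ∑ i ∈ S, m i = ∑ i ∈ Sᶜ, m i}
  have hsub := rankOne_isOptSol_completeW_subset hX hXdiag hXm z
  have hcard : 2 * {Y | IsOptSol (completeW m) Y ∧ Y.rank = 1}.ncard ≤ T.ncard :=
    calc _ ≤ 2 * {S ∈ T | z ∈ S}.ncard := by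
          gcongr
          exact (Set.ncard_le_ncard hsub (Set.toFinite _)).trans Set.ncard_image_le
      _ ≤ T.ncard := Set.two_mul_ncard_sep_mem_le (fun S hS => by simpa [T] using hS.symm) z
  have hupper := rank_le_ncard_of_mem_convexHull ((Set.toFinite _).subset hsub)
    (fun Y hY => hY.2.le) hhull
  have hlower := card_sub_one_le_rank (fun h => (hpos z).ne' (by simp [h])) hXker
  rw [Fintype.card_fin] at hlower
  omega
end
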